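/- Bound on the decryption error term: with w = m·⌊q/2⌋ + x − eᵀ·y as above, if |x| ≤ B_x, ‖e‖ ≤ B_e and ‖y‖ ≤ B_y with B_x + B_e·B_y < ⌊q/4⌋, then the threshold decoder correctly recovers the bit m. -/

import Mathlib

/-!
By Cauchy–Schwarz the noise `x - ⟪e, y⟫` is smaller than `⌊q/4⌋` in absolute value. Since
`2⌊q/4⌋ ≤ ⌊q/2⌋`, a noisy encoding of `0` stays at distance at least `⌊q/4⌋` from `⌊q/2⌋`,
while a noisy encoding of `1` stays within `⌊q/4⌋` of it.
-/

open scoped RealInnerProductSpace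

theorem abs_real_inner_le_of_norm_le {E : Type*} [NormedAddCommGroup E] [InnerProductSpace ℝ E]
    {e y : E} {Be By : ℝ} (he : ‖e‖ ≤ Be) (hy : ‖y‖ ≤ By) : |⟪e, y⟫| ≤ Be * By :=
  (abs_real_inner_le_norm e y).trans (mul_le_mul he hy (norm_nonneg y) ((norm_nonneg e).trans he))

theorem Nat.two_mul_div_four_le_div_two (q : ℕ) : 2 * (q / 4) ≤ q / 2 := by
  omega

theorem threshold_decode_eq {h t ε b : ℝ} (hth : 2 * t ≤ h) (hε : |ε| < t) (hb : b = 0 ∨ b = 1) :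
    (if |b * h + ε - h| < t then (1 : ℝ) else 0) = b := by
  rcases hb with rfl | rfl
  · rw [if_neg]
    rw [zero_mul, zero_add, not_lt, abs_sub_comm]
    calc t ≤ h - ε := by linarith [le_abs_self ε]
      _ ≤ |h - ε| := le_abs_self _
  · rw [if_pos]
    simpa using hε

theorem decryption_error_bound_correct_general
    (q : ℕ) (m : ℕ)
    (e y : EuclideanSpace ℝ (Fin (3 * m)))
    (x Bx Be By : ℝ)
    (hx : |x| ≤ Bx) (he : ‖e‖ ≤ Be) (hy : ‖y‖ ≤ By)
    (hB : Bx + Be * By < ((q / 4 : ℕ) : ℝ))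
    (b : ℝ) (hb : b = 0 ∨ b = 1)
    (w : ℝ) (hw : w = b * ((q / 2 : ℕ) : ℝ) + x - ⟪e, y⟫) :
    (if |w - ((q / 2 : ℕ) : ℝ)| < ((q / 4 : ℕ) : ℝ) then (1 : ℝ) else 0) = b := by
  have hnoise : |x - ⟪e, y⟫| < ((q / 4 : ℕ) : ℝ) :=
    calc |x - ⟪e, y⟫| ≤ |x| + |⟪e, y⟫| := abs_sub _ _
      _ ≤ Bx + Be * By := add_le_add hx (abs_real_inner_le_of_norm_le he hy)
      _ < _ := hB
  have hthreshold : 2 * ((q / 4 : ℕ) : ℝ) ≤ ((q / 2 : ℕ) : ℝ) := by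
    exact_mod_cast Nat.two_mul_div_four_le_div_two q
  rw [hw, add_sub_assoc]
  exact threshold_decode_eq hthreshold hnoise hb

/-- Bound on the decryption error term: if w = b·⌊q/2⌋ + x − ⟨e,y⟩ with
|x| ≤ Bx, ‖e‖ ≤ Be, ‖y‖ ≤ By and Bx + Be·By < ⌊q/4⌋, then the threshold
decoder correctly recovers the bit b. -/
theorem decryption_error_bound_correct
    (q : ℕ) (hq : 4 < q) (m : ℕ)
    (e y : EuclideanSpace ℝ (Fin (3 * m)))
    (x Bx Be By : ℝ)
    (hx : |x| ≤ Bx) (he : ‖e‖ ≤ Be) (hy : ‖y‖ ≤ By)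
    (hB : Bx + Be * By < ((q / 4 : ℕ) : ℝ))
    (b : ℝ) (hb : b = 0 ∨ b = 1)
    (w : ℝ) (hw : w = b * ((q / 2 : ℕ) : ℝ) + x - ⟪e, y⟫) :
    (if |w - ((q / 2 : ℕ) : ℝ)| < ((q / 4 : ℕ) : ℝ) then (1 : ℝ) else 0) = b :=
  decryption_error_bound_correct_general q m e y x Bx Be By hx he hy hB b hb w hw
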